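/- arXiv:1804.03710 — 2 statements merged into one kernel-verified Lean document; each statement's English description precedes it below -/
import Mathlib

section
/- Let i be in {1,...,n}, let lambda in a_Z* satisfy <lambda+rho, alpha_i^v> > l and <lambda+rho, alpha_i^v> not a multiple of l, and let nu in a_Z* satisfy <nu, alpha_i^v> >= 0. Then the element |l*s_i(nu) + s_i∘lambda> + |l*nu + s_i∘lambda> + t^{1/2}|l*s_i(nu) + s_i∘lambda^{(1)}> + t^{1/2}|l*nu + s_i∘lambda^{(1)}> + |l*s_i(nu) + lambda^{(1)}> + |l*nu + lambda^{(1)}> + t^{1/2}|l*s_i(nu) + lambda> + t^{1/2}|l*nu + lambda> of V belongs to I, where lambda^{(1)} is taken relative to i. (Case 3 of the proof of Proposition 1.1) -/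
open Finsupp LaurentPolynomial

noncomputable section

/-- The ring `K = ℤ[t^{1/2}, t^{-1/2}]`: Laurent polynomials over `ℤ` in the
variable `T = t^{1/2}`. -/
abbrev K : Type := LaurentPolynomial ℤ

/-- The element `t^{1/2}` of `K`. -/
def tHalf : K := T 1

/-- The bar involution of `K`, determined by `t^{1/2} ↦ t^{-1/2}`. -/
def conjK : K →+* K := (LaurentPolynomial.invert (R := ℤ)).toRingHom

/-- `V`: the free `K`-module with basis `{|λ⟩ : λ ∈ a_ℤ^*}` indexed by the weight
lattice `Λ`. -/
abbrev V (Λ : Type) : Type := Λ →₀ K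

/-- The basis element `|λ⟩` of `V`. -/
def ket {Λ : Type} (lam : Λ) : V Λ := Finsupp.single lam 1

/-- The data of (the weight lattice of) a reduced finite crystallographic root
system: the weight lattice `Λ = a_ℤ^*`, the (finite) Weyl group `W = W₀` acting
on `Λ` through `σ`, the simple reflections `s i`, the simple roots `α i`, the
pairings `pair i = ⟨·, α_i^∨⟩` with the simple coroots, the finite set
`posRoots` of pairings `⟨·, α^∨⟩` with the coroots `α^∨` of the positive roots
`α ∈ R⁺`, the half-sum `ρ` of the positive roots (assumed to lie in `Λ`), the
longest element `w0` (of length `posRoots.card`), and the sign character `det`. -/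
structure RootData (Λ W : Type) [AddCommGroup Λ] [Group W] [Fintype W] where
  n : ℕ
  σ : W →* Multiplicative (AddAut Λ)
  s : Fin n → W
  α : Fin n → Λ
  pair : Fin n → Λ →+ ℤ
  posRoots : Finset (Λ →+ ℤ)
  ρ : Λ
  w0 : W
  det : W →* ℤˣ
  /-- `s i` acts on `Λ` as the reflection in the simple root `α i`. -/
  reflect : ∀ (i : Fin n) (lam : Λ), (σ (s i)).toAdd lam = lam - pair i lam • α i
  /-- crystallographic normalization `⟨α_i, α_i^∨⟩ = 2`. -/
  pair_alpha_self : ∀ i : Fin n, pair i (α i) = 2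
  /-- the simple reflections are involutions. -/
  s_sq : ∀ i : Fin n, s i * s i = 1
  /-- `W₀` is generated by the simple reflections. -/
  gen_s : Subgroup.closure (Set.range s) = ⊤
  /-- `⟨ρ, α_i^∨⟩ = 1` for every simple coroot. -/
  pair_rho : ∀ i : Fin n, pair i ρ = 1
  /-- each simple coroot is the coroot of a positive root. -/
  pair_mem : ∀ i : Fin n, pair i ∈ posRoots
  /-- the Weyl group permutes the (co)roots up to sign. -/
  roots_perm : ∀ (w : W), ∀ f ∈ posRoots,
    (∃ g ∈ posRoots, ∀ lam, f ((σ w).toAdd lam) = g lam) ∨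
    (∃ g ∈ posRoots, ∀ lam, f ((σ w).toAdd lam) = - g lam)
  /-- `w0` sends every positive root to a negative root (so `w0` is the longest
  element, of length `posRoots.card`). -/
  w0_neg : ∀ f ∈ posRoots, ∃ g ∈ posRoots, ∀ lam, f ((σ w0).toAdd lam) = - g lam
  /-- `det` is the sign character. -/
  det_s : ∀ i : Fin n, det (s i) = -1

namespace RootData

variable {Λ W : Type} [AddCommGroup Λ] [Group W] [Fintype W]

/-- The dot action `w ∘ λ = w(λ + ρ) - ρ`. -/
def dot (D : RootData Λ W) (w : W) (lam : Λ) : Λ := (D.σ w).toAdd (lam + D.ρ) - D.ρ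

/-- `λ^{(1)} = λ - j • α_i`, where `⟨λ + ρ, α_i^∨⟩ = k l + j` with `j ∈ {0, …, l-1}`
(relative to the index `i`). -/
def lamOne (D : RootData Λ W) (l : ℕ) (i : Fin D.n) (lam : Λ) : Λ :=
  lam - (D.pair i (lam + D.ρ) % (l : ℤ)) • D.α i

/-- A weight `λ` is dominant when `⟨λ + ρ, α_i^∨⟩ > 0` for all `i`. -/
def dominant (D : RootData Λ W) (lam : Λ) : Prop :=
  ∀ i : Fin D.n, 0 < D.pair i (lam + D.ρ)

/-- `λ₀ ∈ Π_l`: an `l`-restricted dominant weight. -/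
def restricted (D : RootData Λ W) (l : ℕ) (lam : Λ) : Prop :=
  D.dominant lam ∧ ∀ i : Fin D.n, D.pair i lam ≤ (l : ℤ) - 1

/-- The `K`-submodule `I` of `V` spanned by the straightening elements
(a), (b), (c). -/
def Idl (D : RootData Λ W) (l : ℕ) : Submodule K (V Λ) :=
  Submodule.span K
    ({x | ∃ (i : Fin D.n) (lam : Λ),
        (∃ k : ℤ, 0 ≤ k ∧ D.pair i (lam + D.ρ) = k * l) ∧
        x = ket (D.dot (D.s i) lam) + ket lam} ∪
     {x | ∃ (i : Fin D.n) (lam : Λ),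
        0 < D.pair i (lam + D.ρ) ∧ D.pair i (lam + D.ρ) < (l : ℤ) ∧
        x = ket (D.dot (D.s i) lam) + tHalf • ket lam} ∪
     {x | ∃ (i : Fin D.n) (lam : Λ),
        (l : ℤ) < D.pair i (lam + D.ρ) ∧ ¬ ((l : ℤ) ∣ D.pair i (lam + D.ρ)) ∧
        x = ket (D.dot (D.s i) lam) + tHalf • ket (D.dot (D.s i) (D.lamOne l i lam)) +
            ket (D.lamOne l i lam) + tHalf • ket lam})

/-- The operator `X^μ · : V → V` of the level `-(l+h)` action:
`X^μ · |γ⟩ = |γ - l w0(μ)⟩`. -/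
def opX (D : RootData Λ W) (l : ℕ) (mu : Λ) : V Λ →ₗ[K] V Λ :=
  Finsupp.lmapDomain K K (fun gam => gam - l • (D.σ D.w0).toAdd mu)

/-- The level `-(l+h)` action of an element `g` of the group algebra `K[X]`
(with `K`-coefficients) on `V`. -/
def actKX (D : RootData Λ W) (l : ℕ) (g : Λ →₀ K) (v : V Λ) : V Λ :=
  g.sum fun mu c => c • (D.opX l mu v)

/-- The level `-(l+h)` action of an element `g` of `ℤ[X]` on `V`. -/
def actZX (D : RootData Λ W) (l : ℕ) (g : Λ →₀ ℤ) (v : V Λ) : V Λ :=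
  g.sum fun mu c => c • (D.opX l mu v)

/-- `N_λ = #{α ∈ R⁺ : ⟨λ + ρ, α^∨⟩ ∈ lℤ}`. -/
def Ncount (D : RootData Λ W) (l : ℕ) (lam : Λ) : ℕ :=
  (D.posRoots.filter (fun f => (l : ℤ) ∣ f (lam + D.ρ))).card

/-- The coefficient `(-1)^{l(w0)} (t^{-1/2})^{l(w0) - N_λ}` appearing in the bar
involution, where `l(w0) = Card R⁺`. -/
def barCoef (D : RootData Λ W) (l : ℕ) (lam : Λ) : K :=
  ((-1 : K) ^ D.posRoots.card) * T ((D.Ncount l lam : ℤ) - (D.posRoots.card : ℤ))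

/-- The bar involution of `V`:
`bar(c|λ⟩) = c̄ (-1)^{l(w0)} (t^{-1/2})^{l(w0)-N_λ} |w0 ∘ λ⟩`. -/
def barV (D : RootData Λ W) (l : ℕ) (v : V Λ) : V Λ :=
  v.sum fun lam c => (conjK c * D.barCoef l lam) • ket (D.dot D.w0 lam)

/-- `V⁺`: the `ℤ[t^{1/2}]`-span of the `|μ⟩` inside `V`, i.e. the elements all
of whose coefficients are polynomials in `t^{1/2}`. -/
def inVplus {Λ : Type} (b : V Λ) : Prop :=
  ∀ (mu : Λ) (m : ℤ), m < 0 → (b mu).coeff m = 0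

/-- Membership in `I + t^{1/2} V⁺`. -/
def inIplus (D : RootData Λ W) (l : ℕ) (x : V Λ) : Prop :=
  ∃ a ∈ D.Idl l, ∃ b : V Λ, inVplus b ∧ x = a + tHalf • b

/-- The Weyl numerator `∑_{w ∈ W₀} det(w) X^{w ν}` in `K[X]`. -/
def weylNumer (D : RootData Λ W) (nu : Λ) : AddMonoidAlgebra K Λ :=
  ∑ w : W, ((D.det w : ℤˣ) : ℤ) • AddMonoidAlgebra.single ((D.σ w).toAdd nu) (1 : K)

/-- `g` is the Weyl character `s_ν ∈ ℤ[X]^{W₀} ⊆ K[X]`: it has integer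
coefficients, is `W₀`-invariant, and satisfies the Weyl character formula
`(∑_w det(w) X^{wρ}) · s_ν = ∑_w det(w) X^{w(ν+ρ)}`. -/
def IsWeylChar (D : RootData Λ W) (nu : Λ) (g : AddMonoidAlgebra K Λ) : Prop :=
  (∀ mu : Λ, ∃ z : ℤ, g.coeff mu = (z : K)) ∧
  (∀ (w : W) (mu : Λ), g.coeff ((D.σ w).toAdd mu) = g.coeff mu) ∧
  D.weylNumer D.ρ * g = D.weylNumer (nu + D.ρ)

end RootData

end

/-!
Put `μ = lν + λ`, `p = ⟨λ + ρ, α_i^∨⟩` and `j = p mod l`. All eight weights lie on the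
`α_i`-string through `μ`, and `⟨μ + ρ, α_i^∨⟩ = a + b + j` with `a = l⟨ν, α_i^∨⟩` and
`b = p - j` both in `lℤ`. The eight terms split into two sums of the shape
`|μ - (b+j)α_i⟩ + t^{1/2}|μ - bα_i⟩ + |μ - (a+j)α_i⟩ + t^{1/2}|μ - aα_i⟩`, one for `(a, b)` and
one for `(0, a + b)`. Such a sum is symmetric in `a, b`; for `a < b` it is the relation (c) of
the weight `μ - aα_i`, and for `a = b` it is twice the relation (b) of that weight.
-/

namespace RootData

variable {Λ W : Type} [AddCommGroup Λ] [Group W] [Fintype W] (D : RootData Λ W)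

theorem pair_add_sub_zsmul_alpha (i : Fin D.n) (x : Λ) (c : ℤ) :
    D.pair i (x - c • D.α i + D.ρ) = D.pair i (x + D.ρ) - 2 * c := by
  rw [sub_add_eq_add_sub, map_sub, map_zsmul, D.pair_alpha_self, smul_eq_mul, mul_comm]

theorem dot_s (i : Fin D.n) (x : Λ) :
    D.dot (D.s i) x = x - D.pair i (x + D.ρ) • D.α i := by
  rw [dot, D.reflect]
  abel

theorem dot_s_lamOne (l : ℕ) (i : Fin D.n) (x : Λ) :
    D.dot (D.s i) (D.lamOne l i x) =
      x - (D.pair i (x + D.ρ) - D.pair i (x + D.ρ) % l) • D.α i := by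
  rw [dot_s, lamOne, pair_add_sub_zsmul_alpha]
  module

theorem nsmul_s_add (l : ℕ) (i : Fin D.n) (ν x : Λ) :
    l • (D.σ (D.s i)).toAdd ν + x = l • ν + x - ((l : ℤ) * D.pair i ν) • D.α i := by
  rw [D.reflect, smul_sub, mul_smul, natCast_zsmul]
  abel

theorem straighten_b_mem_Idl {l : ℕ} {i : Fin D.n} {x : Λ} {m : ℤ}
    (hm : D.pair i (x + D.ρ) = m) (hm0 : 0 < m) (hml : m < l) :
    ket (x - m • D.α i) + tHalf • ket x ∈ D.Idl l := by
  refine Submodule.subset_span (Or.inl (Or.inr ⟨i, x, hm ▸ hm0, hm ▸ hml, ?_⟩))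
  rw [dot_s, hm]

theorem straighten_c_mem_Idl {l : ℕ} {i : Fin D.n} {x : Λ} {m : ℤ}
    (hm : D.pair i (x + D.ρ) = m) (hlm : l < m) (hdvd : ¬ (l : ℤ) ∣ m) :
    ket (x - m • D.α i) + tHalf • ket (x - (m - m % l) • D.α i) +
      ket (x - (m % l) • D.α i) + tHalf • ket x ∈ D.Idl l := by
  refine Submodule.subset_span (Or.inr ⟨i, x, hm ▸ hlm, hm ▸ hdvd, ?_⟩)
  rw [dot_s, dot_s_lamOne, lamOne, hm]

noncomputable def straightenPair (i : Fin D.n) (μ : Λ) (j a b : ℤ) : V Λ :=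
  ket (μ - (b + j) • D.α i) + tHalf • ket (μ - b • D.α i) +
    ket (μ - (a + j) • D.α i) + tHalf • ket (μ - a • D.α i)

theorem straightenPair_comm (i : Fin D.n) (μ : Λ) (j a b : ℤ) :
    D.straightenPair i μ j a b = D.straightenPair i μ j b a := by
  simp only [straightenPair]
  abel

section

variable {l : ℕ} {i : Fin D.n} {μ : Λ} {j a b : ℤ}

theorem straightenPair_mem_Idl_of_lt (ha : (l : ℤ) ∣ a) (hb : (l : ℤ) ∣ b)
    (hj0 : 0 < j) (hjl : j < l) (hμ : D.pair i (μ + D.ρ) = a + b + j) (hab : a < b) :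
    D.straightenPair i μ j a b ∈ D.Idl l := by
  obtain ⟨c, hc⟩ := Int.dvd_sub hb ha
  obtain rfl : b = a + l * c := by linarith
  have hpair : D.pair i (μ - a • D.α i + D.ρ) = l * c + j := by
    rw [pair_add_sub_zsmul_alpha, hμ]
    ring
  have hc1 : 1 ≤ c := by
    by_contra! hc1
    nlinarith
  have hmod : (l * c + j) % (l : ℤ) = j := by
    rw [add_comm, Int.add_mul_emod_self_left, Int.emod_eq_of_lt hj0.le hjl]
  have hlm : (l : ℤ) < l * c + j := by nlinarith
  have hdvd : ¬ (l : ℤ) ∣ l * c + j := by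
    rw [Int.dvd_iff_emod_eq_zero, hmod]
    exact hj0.ne'
  have hrel := D.straighten_c_mem_Idl hpair hlm hdvd
  simp only [hmod, sub_sub, ← add_smul, add_sub_cancel_right, ← add_assoc] at hrel
  exact hrel

theorem straightenPair_mem_Idl (ha : (l : ℤ) ∣ a) (hb : (l : ℤ) ∣ b)
    (hj0 : 0 < j) (hjl : j < l) (hμ : D.pair i (μ + D.ρ) = a + b + j) :
    D.straightenPair i μ j a b ∈ D.Idl l := by
  rcases lt_trichotomy a b with hab | rfl | hba
  · exact D.straightenPair_mem_Idl_of_lt ha hb hj0 hjl hμ hab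
  · have hpair : D.pair i (μ - a • D.α i + D.ρ) = j := by
      rw [pair_add_sub_zsmul_alpha, hμ]
      ring
    have hrel := D.straighten_b_mem_Idl hpair hj0 hjl
    rw [sub_sub, ← add_smul] at hrel
    convert add_mem hrel hrel using 1
    rw [straightenPair]
    abel
  · rw [straightenPair_comm]
    exact D.straightenPair_mem_Idl_of_lt hb ha hj0 hjl (by rw [hμ]; ring) hba

end

end RootData

theorem statement3_general {Λ W : Type} [AddCommGroup Λ] [Group W] [Fintype W]
    (D : RootData Λ W) (l : ℕ) (hl : 0 < l) (i : Fin D.n) (lam nu : Λ)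
    (h2 : ¬ ((l : ℤ) ∣ D.pair i (lam + D.ρ))) :
    ket (l • (D.σ (D.s i)).toAdd nu + D.dot (D.s i) lam) +
      ket (l • nu + D.dot (D.s i) lam) +
      tHalf • ket (l • (D.σ (D.s i)).toAdd nu + D.dot (D.s i) (D.lamOne l i lam)) +
      tHalf • ket (l • nu + D.dot (D.s i) (D.lamOne l i lam)) +
      ket (l • (D.σ (D.s i)).toAdd nu + D.lamOne l i lam) +
      ket (l • nu + D.lamOne l i lam) +
      tHalf • ket (l • (D.σ (D.s i)).toAdd nu + lam) +
      tHalf • ket (l • nu + lam) ∈ D.Idl l := by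
  set p := D.pair i (lam + D.ρ)
  set q := D.pair i nu
  set j := p % l
  have hl' : (0 : ℤ) < l := by exact_mod_cast hl
  have hj0 : 0 < j := (Int.emod_nonneg p hl'.ne').lt_of_ne' (mt Int.dvd_of_emod_eq_zero h2)
  have hjl : j < l := Int.emod_lt_of_pos p hl'
  have hpj : (l : ℤ) ∣ p - j := Int.dvd_self_sub_emod
  have hμ : D.pair i (l • nu + lam + D.ρ) = l * q + p := by
    rw [add_assoc, map_add, map_nsmul, nsmul_eq_mul]
  convert add_mem
    (D.straightenPair_mem_Idl (μ := l • nu + lam) (a := 0) (b := l * q + (p - j))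
      (dvd_zero _) (dvd_add (dvd_mul_right _ _) hpj) hj0 hjl (by rw [hμ]; ring))
    (D.straightenPair_mem_Idl (μ := l • nu + lam) (a := l * q) (b := p - j)
      (dvd_mul_right _ _) hpj hj0 hjl (by rw [hμ]; ring)) using 1
  simp only [RootData.straightenPair, RootData.dot_s_lamOne]
  simp only [RootData.dot_s, RootData.lamOne, RootData.nsmul_s_add, ← add_sub_assoc, sub_sub,
    ← add_smul, sub_add_cancel, zero_add, zero_smul, sub_zero]
  abel

/-- Case 3 of the proof of Proposition 1.1: if
`⟨λ+ρ, α_i^∨⟩ > l`, `⟨λ+ρ, α_i^∨⟩ ∉ lℤ`, and `⟨ν, α_i^∨⟩ ≥ 0`, then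
`|l s_iν + s_i∘λ⟩ + |lν + s_i∘λ⟩ + t^{1/2}|l s_iν + s_i∘λ^{(1)}⟩ +
 t^{1/2}|lν + s_i∘λ^{(1)}⟩ + |l s_iν + λ^{(1)}⟩ + |lν + λ^{(1)}⟩ +
 t^{1/2}|l s_iν + λ⟩ + t^{1/2}|lν + λ⟩ ∈ I`. -/
theorem statement3 {Λ W : Type} [AddCommGroup Λ] [Group W] [Fintype W]
    (D : RootData Λ W) (l : ℕ) (hl : 0 < l) (i : Fin D.n) (lam nu : Λ)
    (h1 : (l : ℤ) < D.pair i (lam + D.ρ))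
    (h2 : ¬ ((l : ℤ) ∣ D.pair i (lam + D.ρ)))
    (hnu : 0 ≤ D.pair i nu) :
    ket (l • (D.σ (D.s i)).toAdd nu + D.dot (D.s i) lam) +
      ket (l • nu + D.dot (D.s i) lam) +
      tHalf • ket (l • (D.σ (D.s i)).toAdd nu + D.dot (D.s i) (D.lamOne l i lam)) +
      tHalf • ket (l • nu + D.dot (D.s i) (D.lamOne l i lam)) +
      ket (l • (D.σ (D.s i)).toAdd nu + D.lamOne l i lam) +
      ket (l • nu + D.lamOne l i lam) +
      tHalf • ket (l • (D.σ (D.s i)).toAdd nu + lam) +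
      tHalf • ket (l • nu + lam) ∈ D.Idl l :=
  statement3_general D l hl i lam nu h2
end

section
/- For every lambda in a_Z* and every w in W0, the element |w∘(l*lambda - rho)> - det(w) |l*lambda - rho> of V belongs to I. (Straightening law on the shifted l-dilated lattice, generalizing equation (2.10) of the paper) -/
open Finsupp LaurentPolynomial

/-! The generators of `I` of type (a) say that `|s_i ∘ μ⟩ ≡ -|μ⟩` whenever `l` divides
`⟨μ + ρ, α_i^∨⟩` (if the multiple is negative, apply (a) to `s_i ∘ μ` instead). The weights
`μ` with `μ + ρ ∈ l Λ` form a set stable under the dot action on which all these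
divisibilities hold, so on it `w ↦ |w ∘ μ⟩` is alternating modulo `I` for the simple
reflections, hence equal to `det w • |μ⟩` for every `w`, the `s_i` generating `W₀`. -/

namespace RootData

variable {Λ W : Type} [AddCommGroup Λ] [Group W] [Fintype W] (D : RootData Λ W)

theorem dot_one (mu : Λ) : D.dot 1 mu = mu := by
  simp [dot]

theorem dot_mul (u v : W) (mu : Λ) : D.dot (u * v) mu = D.dot u (D.dot v mu) := by
  simp only [dot, sub_add_cancel, map_mul, toAdd_mul, AddAut.add_apply]

theorem dot_add_rho (w : W) (mu : Λ) : D.dot w mu + D.ρ = (D.σ w).toAdd (mu + D.ρ) :=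
  sub_add_cancel _ _

theorem pair_dot_s_add_rho (i : Fin D.n) (mu : Λ) :
    D.pair i (D.dot (D.s i) mu + D.ρ) = -D.pair i (mu + D.ρ) := by
  rw [dot_add_rho, D.reflect, map_sub, map_zsmul, D.pair_alpha_self, smul_eq_mul]
  ring

theorem dot_s_dot_s (i : Fin D.n) (mu : Λ) : D.dot (D.s i) (D.dot (D.s i) mu) = mu := by
  rw [← dot_mul, D.s_sq, dot_one]

theorem ket_dot_s_add_ket_mem_Idl {l : ℕ} {i : Fin D.n} {mu : Λ}
    (hdvd : (l : ℤ) ∣ D.pair i (mu + D.ρ)) :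
    ket (D.dot (D.s i) mu) + ket mu ∈ D.Idl l := by
  obtain ⟨k, hk⟩ := hdvd
  have generator_a (nu : Λ) (hnu : ∃ k : ℤ, 0 ≤ k ∧ D.pair i (nu + D.ρ) = k * l) :
      ket (D.dot (D.s i) nu) + ket nu ∈ D.Idl l :=
    Submodule.subset_span (Or.inl (Or.inl ⟨i, nu, hnu, rfl⟩))
  rcases le_or_gt 0 k with hk0 | hk0
  · exact generator_a mu ⟨k, hk0, by rw [hk, mul_comm]⟩
  · have h := generator_a (D.dot (D.s i) mu)
      ⟨-k, by omega, by rw [pair_dot_s_add_rho, hk]; ring⟩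
    rwa [dot_s_dot_s, add_comm] at h

theorem ket_dot_sub_det_smul_mem {N : Submodule K (V Λ)} {P : Λ → Prop}
    (hP : ∀ (w : W) (mu : Λ), P mu → P (D.dot w mu))
    (hs : ∀ (i : Fin D.n) (mu : Λ), P mu → ket (D.dot (D.s i) mu) + ket mu ∈ N)
    (w : W) {mu : Λ} (hmu : P mu) :
    ket (D.dot w mu) - ((D.det w : ℤ) • ket mu : V Λ) ∈ N := by
  have step (i : Fin D.n) (y : W)
      (ih : ∀ {mu : Λ}, P mu → ket (D.dot y mu) - ((D.det y : ℤ) • ket mu : V Λ) ∈ N)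
      {mu : Λ} (hmu : P mu) :
      ket (D.dot (D.s i * y) mu) - ((D.det (D.s i * y) : ℤ) • ket mu : V Λ) ∈ N := by
    have h := N.sub_mem (hs i _ (hP y mu hmu)) (ih hmu)
    convert h using 1
    simp only [dot_mul, map_mul, D.det_s, Units.val_neg, neg_one_mul, neg_smul]
    abel
  have hw : w ∈ Subgroup.closure (Set.range D.s) := D.gen_s ▸ Subgroup.mem_top w
  induction hw using Subgroup.closure_induction_left generalizing mu with
  | one => simp [dot_one]
  | mul_left x hx y _ ih =>
    obtain ⟨i, rfl⟩ := hx
    exact step i y ih hmu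
  | inv_mul_cancel x hx y _ ih =>
    obtain ⟨i, rfl⟩ := hx
    rw [inv_eq_of_mul_eq_one_right (D.s_sq i)]
    exact step i y ih hmu

end RootData

theorem statement11_general {Λ W : Type} [AddCommGroup Λ] [Group W] [Fintype W]
    (D : RootData Λ W) (l : ℕ) (lam : Λ) (w : W) :
    ket (D.dot w (l • lam - D.ρ)) - ((D.det w : ℤ) • ket (l • lam - D.ρ) : V Λ)
      ∈ D.Idl l := by
  let onDilatedLattice (mu : Λ) : Prop := ∃ nu : Λ, mu + D.ρ = l • nu
  have stable (u : W) (mu : Λ) : onDilatedLattice mu → onDilatedLattice (D.dot u mu) := by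
    rintro ⟨nu, hnu⟩
    exact ⟨(D.σ u).toAdd nu, by rw [D.dot_add_rho, hnu, map_nsmul]⟩
  have alternating (i : Fin D.n) (mu : Λ) (hmu : onDilatedLattice mu) :
      ket (D.dot (D.s i) mu) + ket mu ∈ D.Idl l := by
    obtain ⟨nu, hnu⟩ := hmu
    exact D.ket_dot_s_add_ket_mem_Idl ⟨D.pair i nu, by rw [hnu, map_nsmul, nsmul_eq_mul]⟩
  exact D.ket_dot_sub_det_smul_mem stable alternating w ⟨lam, sub_add_cancel _ _⟩

/-- straightening law on the shifted `l`-dilated lattice,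
generalizing equation (2.10) of the paper: for every `λ ∈ a_ℤ^*` and `w ∈ W₀`,
`|w∘(lλ - ρ)⟩ - det(w)|lλ - ρ⟩ ∈ I`. -/
theorem statement11 {Λ W : Type} [AddCommGroup Λ] [Group W] [Fintype W]
    (D : RootData Λ W) (l : ℕ) (hl : 0 < l) (lam : Λ) (w : W) :
    ket (D.dot w (l • lam - D.ρ)) - ((D.det w : ℤ) • ket (l • lam - D.ρ) : V Λ)
      ∈ D.Idl l :=
  statement11_general D l lam w
end
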